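/- Let P and Q be vector subspaces of R^n and let v be a unit vector of R^n not contained in the orthogonal complement of Q. Then the angle between P ∩ v^⊥ and Q ∩ v^⊥ is at most 2·∠(P,Q)/d(v, Q^⊥), where for subspaces E, F the angle is defined as ∠(E,F) := sup_{u ∈ E, |u| ≤ 1} d(u, F) and d denotes Euclidean distance. -/

import Mathlib

/-!
Let `w` be the orthogonal projection of `v` onto `Q`; since `v - w ∈ Qᗮ`, `‖w‖ ≥ d(v, Qᗮ)`.
On `Q` the functional `⟪v, ·⟫` agrees with `⟪w, ·⟫`, so subtracting `(⟪v, q⟫ / ‖w‖²) • w`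
moves any `q ∈ Q` into `Q ∩ v^⊥` at cost `|⟪v, q⟫| / ‖w‖`. For `u ⊥ v` this is
`|⟪v, q - u⟫| / ‖w‖ ≤ ‖u - q‖ / ‖w‖`, hence `d(u, Q ∩ v^⊥) ≤ (1 + 1 / ‖w‖) d(u, Q)`, and
`1 + 1 / ‖w‖ ≤ 2 / d(v, Qᗮ)` because `d(v, Qᗮ) ≤ ‖v‖ = 1`.
-/

open Metric Set

/-- The angle `∠(E,F) := sup { d(u,F) : u ∈ E, ‖u‖ ≤ 1 }` between two subspaces. -/
noncomputable def subAngle {n : ℕ} (E F : Submodule ℝ (EuclideanSpace ℝ (Fin n))) : ℝ :=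
  sSup {r : ℝ | ∃ u ∈ E, ‖u‖ ≤ 1 ∧ r = Metric.infDist u (F : Set (EuclideanSpace ℝ (Fin n)))}

open scoped RealInnerProductSpace

namespace Submodule

variable {E : Type*} [NormedAddCommGroup E] [InnerProductSpace ℝ E]
variable (K : Submodule ℝ E) [K.HasOrthogonalProjection]

theorem infDist_orthogonal_le_norm_starProjection (v : E) :
    infDist v (Kᗮ : Set E) ≤ ‖K.starProjection v‖ := by
  simpa [dist_eq_norm] using infDist_le_dist_of_mem (x := v) (K.sub_starProjection_mem_orthogonal v)

theorem inner_starProjection_eq_of_mem {v q : E} (hq : q ∈ K) :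
    ⟪K.starProjection v, q⟫ = ⟪v, q⟫ := by
  rw [inner_starProjection_left_eq_right, K.starProjection_eq_self_iff.2 hq]

theorem exists_mem_inf_orthogonal_singleton_norm_sub_le {v q : E}
    (hv : K.starProjection v ≠ 0) (hq : q ∈ K) :
    ∃ q' ∈ K ⊓ (ℝ ∙ v)ᗮ, ‖q - q'‖ ≤ |⟪v, q⟫| / ‖K.starProjection v‖ := by
  set w := K.starProjection v
  have hw : 0 < ‖w‖ := norm_pos_iff.2 hv
  have hwK : w ∈ K := K.starProjection_apply_mem v
  refine ⟨q - (⟪v, q⟫ / ‖w‖ ^ 2) • w, mem_inf.2 ⟨K.sub_mem hq (K.smul_mem _ hwK), ?_⟩, ?_⟩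
  · rw [mem_orthogonal_singleton_iff_inner_right, inner_sub_right, inner_smul_right,
      ← K.inner_starProjection_eq_of_mem hwK, real_inner_self_eq_norm_sq]
    field_simp
    ring
  · rw [sub_sub_cancel, norm_smul, norm_div, norm_pow, norm_norm, Real.norm_eq_abs]
    exact le_of_eq (by field_simp)

theorem infDist_inf_orthogonal_singleton_le {u v : E} (huv : ⟪v, u⟫ = 0) (hvK : v ∉ Kᗮ) :
    infDist u (K ⊓ (ℝ ∙ v)ᗮ : Set E) ≤
      2 * ‖v‖ / infDist v (Kᗮ : Set E) * infDist u (K : Set E) := by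
  set ε := infDist v (Kᗮ : Set E)
  set w := K.starProjection v
  have hε : 0 < ε := (K.isClosed_orthogonal.notMem_iff_infDist_pos ⟨0, Kᗮ.zero_mem⟩).1 hvK
  have hεv : ε ≤ ‖v‖ := by simpa using infDist_le_dist_of_mem (x := v) Kᗮ.zero_mem
  have hεw : ε ≤ ‖w‖ := K.infDist_orthogonal_le_norm_starProjection v
  have hw : w ≠ 0 := norm_pos_iff.1 (hε.trans_le hεw)
  have hc : 0 < 2 * ‖v‖ / ε := by have := hε.trans_le hεv; positivity
  rw [mul_comm, ← div_le_iff₀ hc, le_infDist ⟨0, K.zero_mem⟩]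
  intro q hq
  obtain ⟨q', hq', hqq'⟩ := K.exists_mem_inf_orthogonal_singleton_norm_sub_le hw hq
  have hvq : |⟪v, q⟫| ≤ ‖v‖ * ‖u - q‖ := by
    rw [← norm_sub_rev, show ⟪v, q⟫ = ⟪v, q - u⟫ by rw [inner_sub_right, huv, sub_zero]]
    exact abs_real_inner_le_norm v (q - u)
  rw [div_le_iff₀ hc, dist_eq_norm]
  calc infDist u (K ⊓ (ℝ ∙ v)ᗮ : Set E) ≤ ‖u - q‖ + ‖q - q'‖ :=
        ((infDist_le_dist_of_mem hq').trans_eq (dist_eq_norm u q')).trans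
          (norm_sub_le_norm_sub_add_norm_sub u q q')
    _ ≤ ‖u - q‖ + ‖v‖ * ‖u - q‖ / ‖w‖ := by gcongr; exact hqq'.trans (by gcongr)
    _ ≤ ‖v‖ / ε * ‖u - q‖ + ‖v‖ / ε * ‖u - q‖ := by
        gcongr
        · exact le_mul_of_one_le_left (norm_nonneg _) ((one_le_div hε).2 hεv)
        · rw [mul_div_right_comm]; gcongr
    _ = ‖u - q‖ * (2 * ‖v‖ / ε) := by ring

end Submodule

section SubAngle

variable {n : ℕ}

theorem infDist_le_subAngle {E F : Submodule ℝ (EuclideanSpace ℝ (Fin n))}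
    {u : EuclideanSpace ℝ (Fin n)} (hu : u ∈ E) (hu1 : ‖u‖ ≤ 1) :
    infDist u (F : Set (EuclideanSpace ℝ (Fin n))) ≤ subAngle E F := by
  refine le_csSup ⟨1, ?_⟩ ⟨u, hu, hu1, rfl⟩
  rintro _ ⟨x, -, hx1, rfl⟩
  simpa using (infDist_le_dist_of_mem (x := x) F.zero_mem).trans (by simpa using hx1)

theorem subAngle_le {E F : Submodule ℝ (EuclideanSpace ℝ (Fin n))} {C : ℝ}
    (h : ∀ u ∈ E, ‖u‖ ≤ 1 → infDist u (F : Set (EuclideanSpace ℝ (Fin n))) ≤ C) :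
    subAngle E F ≤ C := by
  refine csSup_le ⟨_, 0, E.zero_mem, by simp, rfl⟩ ?_
  rintro _ ⟨u, hu, hu1, rfl⟩
  exact h u hu hu1

end SubAngle

/-- For subspaces `P, Q` of `ℝⁿ` and a unit vector `v ∉ Qᗮ`,
`∠(P ∩ v^⊥, Q ∩ v^⊥) ≤ 2 ∠(P,Q) / d(v, Qᗮ)`. -/
theorem stmt0 {n : ℕ} (P Q : Submodule ℝ (EuclideanSpace ℝ (Fin n)))
    (v : EuclideanSpace ℝ (Fin n)) (hv : ‖v‖ = 1) (hvQ : v ∉ Qᗮ) :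
    subAngle (P ⊓ (ℝ ∙ v)ᗮ) (Q ⊓ (ℝ ∙ v)ᗮ) ≤
      2 * subAngle P Q / Metric.infDist v (Qᗮ : Set (EuclideanSpace ℝ (Fin n))) := by
  set ε := infDist v (Qᗮ : Set (EuclideanSpace ℝ (Fin n)))
  refine subAngle_le fun u hu hu1 => ?_
  obtain ⟨huP, huv⟩ := Submodule.mem_inf.1 hu
  calc infDist u (Q ⊓ (ℝ ∙ v)ᗮ : Set (EuclideanSpace ℝ (Fin n)))
        ≤ 2 / ε * infDist u (Q : Set (EuclideanSpace ℝ (Fin n))) := by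
        simpa only [hv, mul_one] using Q.infDist_inf_orthogonal_singleton_le
          (Submodule.mem_orthogonal_singleton_iff_inner_right.1 huv) hvQ
    _ ≤ 2 / ε * subAngle P Q :=
        mul_le_mul_of_nonneg_left (infDist_le_subAngle huP hu1) (div_nonneg zero_le_two infDist_nonneg)
    _ = 2 * subAngle P Q / ε := by ring
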